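/- Let A = {0,1}, let k be odd with k ≥ 1, and let n ≥ k+1. Each of the sequences γ^{n,k} and ρ^{n,k} (of length 2^n) has pairwise distinct terms and enumerates every word of {0,1}^n exactly once; that is, the maps i ↦ γ^{n,k}_{[i]} and i ↦ ρ^{n,k}_{[i]} are bijections from [0, 2^n−1] onto {0,1}^n. -/

import Mathlib

/-- Hamming distance between two words (lists) of the same length:
the number of positions in which they differ. -/
def hammingL {α : Type*} [DecidableEq α] (w w' : List α) : ℕ :=
  ((w.zip w').filter fun q => decide (q.1 ≠ q.2)).length

/-- `w` (restricted to indices `< N`) is a `σ_k`-Gray cycle over `X`: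
its terms are pairwise distinct and enumerate `X` (a bijection from `[0, N-1]` onto `X`),
two consecutive terms have the same length and Hamming distance exactly `k`, and so do
the first and the last term. -/
def IsGrayCycleOn {α : Type*} [DecidableEq α] (k N : ℕ) (w : ℕ → List α)
    (X : Set (List α)) : Prop :=
  Set.BijOn w (Set.Iio N) X ∧
  (∀ i, 1 ≤ i → i < N →
    (w (i - 1)).length = (w i).length ∧ hammingL (w (i - 1)) (w i) = k) ∧
  (0 < N → (w (N - 1)).length = (w 0).length ∧ hammingL (w (N - 1)) (w 0) = k)

/-- The bit complement `θ : 0 ↔ 1` on the binary alphabet `{0,1}`. -/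
def cpl (x : Fin 2) : Fin 2 := x + 1

/-- The bit complement extended letterwise to binary words. -/
def cplW (w : List (Fin 2)) : List (Fin 2) := w.map cpl

/-- The reflected binary Gray code `g^{m,1}` over words of length `m`:
`g^{0,1} = (ε)` and `g^{m+1,1} = (0·g^{m,1}, 1·(g^{m,1})^R)`. -/
def binGray : ℕ → List (List (Fin 2))
  | 0 => [[]]
  | m + 1 =>
      (binGray m).map (fun w => 0 :: w) ++ (binGray m).reverse.map (fun w => 1 :: w)

/-- The sequence `γ^{n0,1}`: `γ^{n0,1}_{[0]} = g^{n0,1}_{[0]}` and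
`γ^{n0,1}_{[i]} = g^{n0,1}_{[2^{n0} - i]}` for `1 ≤ i ≤ 2^{n0} - 1`. -/
def gamma1 (n0 i : ℕ) : List (Fin 2) :=
  if i = 0 then (binGray n0).getD 0 [] else (binGray n0).getD (2 ^ n0 - i) []

/-- The sequence `ρ^{n0,1}`: `ρ^{n0,1}_{[0]} = g^{n0,1}_{[2^{n0}-1]}` and
`ρ^{n0,1}_{[i]} = g^{n0,1}_{[i-1]}` for `1 ≤ i ≤ 2^{n0} - 1`. -/
def rho1 (n0 i : ℕ) : List (Fin 2) :=
  if i = 0 then (binGray n0).getD (2 ^ n0 - 1) [] else (binGray n0).getD (i - 1) []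

/-- `grSeq n0 true t i` (resp. `grSeq n0 false t i`) is the term of index `i` of the
sequence `γ^{n0+2t, 2t+1}` (resp. `ρ^{n0+2t, 2t+1}`), built inductively: the base cases
are `γ^{n0,1}` and `ρ^{n0,1}`, and, writing `i = q·2^m + r` with `m = n0 + 2t` and
`r < 2^m`, `γ^{m+2, (2t+1)+2}_{[i]}` is `θ^r(00)·γ^{m,2t+1}_{[r]}`, `θ^r(01)·ρ^{m,2t+1}_{[r]}`,
`θ^r(11)·γ^{m,2t+1}_{[r]}`, `θ^r(10)·ρ^{m,2t+1}_{[r]}` according to `q = 0, 1, 2, 3`, and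
`ρ^{m+2, (2t+1)+2}_{[i]}` is `θ^r(10)·γ^{m,2t+1}_{[r]}`, `θ^r(11)·ρ^{m,2t+1}_{[r]}`,
`θ^r(01)·γ^{m,2t+1}_{[r]}`, `θ^r(00)·ρ^{m,2t+1}_{[r]}` according to `q = 0, 1, 2, 3`. -/
def grSeq (n0 : ℕ) : Bool → ℕ → ℕ → List (Fin 2)
  | b, 0, i => if b then gamma1 n0 i else rho1 n0 i
  | b, t + 1, i =>
      cplW^[i % 2 ^ (n0 + 2 * t)]
        (if b then
          (if i / 2 ^ (n0 + 2 * t) = 0 then [0, 0]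
           else if i / 2 ^ (n0 + 2 * t) = 1 then [0, 1]
           else if i / 2 ^ (n0 + 2 * t) = 2 then [1, 1] else [1, 0])
         else
          (if i / 2 ^ (n0 + 2 * t) = 0 then [1, 0]
           else if i / 2 ^ (n0 + 2 * t) = 1 then [1, 1]
           else if i / 2 ^ (n0 + 2 * t) = 2 then [0, 1] else [0, 0])) ++
        grSeq n0 (i / 2 ^ (n0 + 2 * t) % 2 == 0) t (i % 2 ^ (n0 + 2 * t))

/-- For odd `k` and `n ≥ k + 1`, `gammaNK n k i` is the term `γ^{n,k}_{[i]}`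
(here `n0 = n - k + 1` and `k = 2·(k/2) + 1`). -/
def gammaNK (n k i : ℕ) : List (Fin 2) := grSeq (n + 1 - k) true (k / 2) i

/-- For odd `k` and `n ≥ k + 1`, `rhoNK n k i` is the term `ρ^{n,k}_{[i]}`. -/
def rhoNK (n k i : ℕ) : List (Fin 2) := grSeq (n + 1 - k) false (k / 2) i


/-!
By induction on `k`. For `k = 1`, `γ^{n0,1}` and `ρ^{n0,1}` are reindexings of the reflected
Gray code by permutations of `[0, 2^{n0} - 1]`, and the reflected Gray code lists every word
of length `n0` exactly once. In the inductive step, a word `a a' s` with `|s| = n` is hit as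
follows: `s = γ^{n,k}_{[r]}` or `s = ρ^{n,k}_{[r]}`, whichever kind of block carries prefixes
with `a = a'` (resp. `a ≠ a'`), and among the two blocks of that kind exactly one has
`θ^r(prefix) = a a'`. Since there are as many indices as words, surjectivity suffices.
-/

theorem Set.bijOn_of_surjOn_of_ncard_eq {α β : Type*} {f : α → β} {s : Set α} {t : Set β}
    (hs : s.Finite) (hmaps : Set.MapsTo f s t) (hsurj : Set.SurjOn f s t)
    (hcard : t.ncard = s.ncard) : Set.BijOn f s t := by
  refine ⟨hmaps, Set.injOn_of_ncard_image_eq ?_ hs, hsurj⟩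
  rw [hsurj.image_eq_of_mapsTo hmaps, hcard]

theorem ncard_setOf_length_eq (α : Type*) [Fintype α] (n : ℕ) :
    {w : List α | w.length = n}.ncard = Fintype.card α ^ n := by
  rw [← Nat.card_coe_set_eq]
  exact (Nat.card_eq_fintype_card (α := List.Vector α n)).trans (card_vector n)

theorem bijOn_words_of_surjOn {f : ℕ → List (Fin 2)} {n : ℕ}
    (hmaps : Set.MapsTo f (Set.Iio (2 ^ n)) {w | w.length = n})
    (hsurj : Set.SurjOn f (Set.Iio (2 ^ n)) {w | w.length = n}) :
    Set.BijOn f (Set.Iio (2 ^ n)) {w | w.length = n} :=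
  Set.bijOn_of_surjOn_of_ncard_eq (Set.finite_Iio _) hmaps hsurj
    (by rw [ncard_setOf_length_eq, Fintype.card_fin, Set.ncard_Iio_nat])

theorem length_binGray (m : ℕ) : (binGray m).length = 2 ^ m := by
  induction m with
  | zero => rfl
  | succ m ih => simp [binGray, ih, pow_succ, mul_two]

theorem mem_binGray_iff {m : ℕ} {w : List (Fin 2)} : w ∈ binGray m ↔ w.length = m := by
  induction m generalizing w with
  | zero => simp [binGray]
  | succ m ih =>
    cases w with
    | nil => simp [binGray]
    | cons a v => fin_cases a <;> simp [binGray, ih]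

theorem binGray_getD_bijOn (m : ℕ) :
    Set.BijOn (fun i => (binGray m).getD i []) (Set.Iio (2 ^ m)) {w | w.length = m} := by
  refine bijOn_words_of_surjOn (fun i hi => ?_) (fun w hw => ?_)
  · rw [Set.mem_Iio, ← length_binGray m] at hi
    rw [Set.mem_ofPred_eq, List.getD_eq_getElem _ _ hi, ← mem_binGray_iff]
    exact List.getElem_mem hi
  · obtain ⟨i, hi, rfl⟩ := List.mem_iff_getElem.mp (mem_binGray_iff.mpr hw)
    exact ⟨i, by simpa [length_binGray] using hi, List.getD_eq_getElem _ _ hi⟩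

theorem bijOn_Iio_reflect (N : ℕ) :
    Set.BijOn (fun i => if i = 0 then 0 else N - i) (Set.Iio N) (Set.Iio N) := by
  refine Set.InvOn.bijOn (f' := fun i : ℕ => if i = 0 then 0 else N - i) ⟨?_, ?_⟩ ?_ ?_
  all_goals
    intro i hi
    simp only [Set.mem_Iio] at hi ⊢
    split_ifs <;> omega

theorem bijOn_Iio_rotate (N : ℕ) :
    Set.BijOn (fun i => if i = 0 then N - 1 else i - 1) (Set.Iio N) (Set.Iio N) := by
  refine Set.InvOn.bijOn (f' := fun i : ℕ => if i = N - 1 then 0 else i + 1) ⟨?_, ?_⟩ ?_ ?_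
  all_goals
    intro i hi
    simp only [Set.mem_Iio] at hi ⊢
    split_ifs <;> first | omega | contradiction

theorem gamma1_bijOn (n0 : ℕ) :
    Set.BijOn (gamma1 n0) (Set.Iio (2 ^ n0)) {w | w.length = n0} :=
  ((binGray_getD_bijOn n0).comp (bijOn_Iio_reflect _)).congr fun i _ => by
    simp only [Function.comp, gamma1]; split_ifs <;> rfl

theorem rho1_bijOn (n0 : ℕ) :
    Set.BijOn (rho1 n0) (Set.Iio (2 ^ n0)) {w | w.length = n0} :=
  ((binGray_getD_bijOn n0).comp (bijOn_Iio_rotate _)).congr fun i _ => by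
    simp only [Function.comp, rho1]; split_ifs <;> rfl

/-- The two-letter prefix of `γ^{m+2,k+2}_{[q·2^m + r]}` (`b = true`) or
`ρ^{m+2,k+2}_{[q·2^m + r]}` (`b = false`) before complementation by `θ^r`. -/
def grPrefix (b : Bool) (q : ℕ) : List (Fin 2) :=
  if b then
    (if q = 0 then [0, 0] else if q = 1 then [0, 1] else if q = 2 then [1, 1] else [1, 0])
  else
    (if q = 0 then [1, 0] else if q = 1 then [1, 1] else if q = 2 then [0, 1] else [0, 0])

theorem length_grPrefix (b : Bool) (q : ℕ) : (grPrefix b q).length = 2 := by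
  unfold grPrefix; split_ifs <;> rfl

/-- Complementing preserves whether the two letters agree; they agree exactly in the blocks
where `γ` continues with `γ` and `ρ` continues with `ρ`, and each of the two blocks of a
kind contributes one of the two prefixes with that agreement. -/
theorem exists_grPrefix_map_add_eq (b : Bool) (c a a' : Fin 2) :
    ∃ q < 4, (q % 2 == 0) = (b == (a == a')) ∧ (grPrefix b q).map (· + c) = [a, a'] := by
  revert b c a a'; decide

section

open Fin.NatCast

theorem cplW_iterate (r : ℕ) (w : List (Fin 2)) : cplW^[r] w = w.map (· + (r : Fin 2)) := by
  induction r generalizing w with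
  | zero => simp
  | succ r ih =>
    rw [Function.iterate_succ_apply, ih, cplW, List.map_map]
    congr 1
    funext z
    simp only [Function.comp, cpl, Nat.cast_succ]
    abel

theorem grSeq_succ (n0 t : ℕ) (b : Bool) (i : ℕ) :
    grSeq n0 b (t + 1) i =
      (grPrefix b (i / 2 ^ (n0 + 2 * t))).map (· + ((i % 2 ^ (n0 + 2 * t) : ℕ) : Fin 2)) ++
        grSeq n0 (i / 2 ^ (n0 + 2 * t) % 2 == 0) t (i % 2 ^ (n0 + 2 * t)) := by
  rw [grSeq, cplW_iterate, grPrefix]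

theorem grSeq_mapsTo (n0 t : ℕ) (b : Bool) :
    Set.MapsTo (grSeq n0 b t) (Set.Iio (2 ^ (n0 + 2 * t))) {w | w.length = n0 + 2 * t} := by
  induction t generalizing b with
  | zero =>
    cases b
    · exact (rho1_bijOn n0).mapsTo
    · exact (gamma1_bijOn n0).mapsTo
  | succ t ih =>
    intro i _
    have hr : i % 2 ^ (n0 + 2 * t) < 2 ^ (n0 + 2 * t) := Nat.mod_lt _ (by positivity)
    rw [Set.mem_ofPred_eq, grSeq_succ, List.length_append, List.length_map, length_grPrefix,
      ih _ hr]
    ring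

theorem grSeq_surjOn (n0 t : ℕ) (b : Bool) :
    Set.SurjOn (grSeq n0 b t) (Set.Iio (2 ^ (n0 + 2 * t))) {w | w.length = n0 + 2 * t} := by
  induction t generalizing b with
  | zero =>
    cases b
    · exact (rho1_bijOn n0).surjOn
    · exact (gamma1_bijOn n0).surjOn
  | succ t ih =>
    rintro (_ | ⟨a, _ | ⟨a', s⟩⟩) hw <;>
      simp only [Set.mem_ofPred_eq, List.length_nil, List.length_cons] at hw
    · omega
    · omega
    set M := 2 ^ (n0 + 2 * t)
    obtain ⟨r, hr : r < M, rfl⟩ := ih (b == (a == a')) (show s.length = n0 + 2 * t by omega)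
    obtain ⟨q, hq, hkind, hprefix⟩ := exists_grPrefix_map_add_eq b r a a'
    have hM : 0 < M := by positivity
    have hdiv : (q * M + r) / M = q := by
      rw [Nat.add_comm, Nat.add_mul_div_right _ _ hM, Nat.div_eq_of_lt hr, zero_add]
    have hmod : (q * M + r) % M = r := by
      rw [Nat.add_comm, Nat.add_mul_mod_self_right, Nat.mod_eq_of_lt hr]
    refine ⟨q * M + r, ?_, ?_⟩
    · have h4M : 2 ^ (n0 + 2 * (t + 1)) = 4 * M := by simp only [M]; ring
      rw [Set.mem_Iio, h4M]
      nlinarith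
    · rw [grSeq_succ, hdiv, hmod, hprefix, hkind]
      rfl

end

theorem grSeq_bijOn (n0 t : ℕ) (b : Bool) :
    Set.BijOn (grSeq n0 b t) (Set.Iio (2 ^ (n0 + 2 * t))) {w | w.length = n0 + 2 * t} :=
  bijOn_words_of_surjOn (grSeq_mapsTo n0 t b) (grSeq_surjOn n0 t b)

theorem statement5_general (n k : ℕ) (hk : Odd k) (hn : k + 1 ≤ n) :
    Set.BijOn (gammaNK n k) (Set.Iio (2 ^ n)) {w : List (Fin 2) | w.length = n} ∧
    Set.BijOn (rhoNK n k) (Set.Iio (2 ^ n)) {w : List (Fin 2) | w.length = n} := by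
  obtain ⟨t, rfl⟩ := hk
  have ht : (2 * t + 1) / 2 = t := by omega
  have hlen : n + 1 - (2 * t + 1) + 2 * t = n := by omega
  have h := grSeq_bijOn (n + 1 - (2 * t + 1)) t
  rw [hlen] at h
  unfold gammaNK rhoNK
  rw [ht]
  exact ⟨h true, h false⟩

/-- For `k` odd with `k ≥ 1` and `n ≥ k + 1`, each of `i ↦ γ^{n,k}_{[i]}` and
`i ↦ ρ^{n,k}_{[i]}` is a bijection from `[0, 2^n - 1]` onto `{0,1}^n`. -/
theorem statement5 (n k : ℕ) (hk1 : 1 ≤ k) (hk : Odd k) (hn : k + 1 ≤ n) :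
    Set.BijOn (gammaNK n k) (Set.Iio (2 ^ n)) {w : List (Fin 2) | w.length = n} ∧
    Set.BijOn (rhoNK n k) (Set.Iio (2 ^ n)) {w : List (Fin 2) | w.length = n} :=
  statement5_general n k hk hn
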